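/- arXiv:1901.01396 — 7 statements merged into one kernel-verified Lean document; each statement's English description precedes it below -/
import Mathlib

section
/- In the free group F₂ = ⟨a,b⟩, if u is a cyclically reduced word of the form u = e_r ⋯ e_1 f e_1 ⋯ e_r (a palindrome of odd length 2r+1 in the letters {a±1, b±1}) and u' is a cyclic permutation of u that is also a palindrome of the same form with center e_k for some 1 ≤ k ≤ r, then u' = u. -/
/-- Two consecutive letters of a word in the letters `{a^{±1}, b^{±1}}` do not cancel. -/
def NoCancel (p q : Bool × Bool) : Prop := ¬(p.1 = q.1 ∧ p.2 ≠ q.2)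

/-- A word (as a list of letters of `F₂`) is cyclically reduced if the doubled word
is reduced, i.e. no two consecutive letters (cyclically) cancel. -/
def CyclicallyReducedWord (u : List (Bool × Bool)) : Prop :=
  List.Chain' NoCancel (u ++ u)

/-- If `u` is a cyclically reduced palindromic word of odd length `2r+1` in `F₂ = ⟨a,b⟩`
and `u'` is a cyclic permutation of `u` which is also a palindrome, then `u' = u`. -/
theorem palindromic_cyclic_permutation_eq
    (u u' : List (Bool × Bool)) (r j : ℕ)
    (hlen : u.length = 2 * r + 1)
    (hcyc : CyclicallyReducedWord u)
    (hpal : u.reverse = u)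
    (hrot : u' = u.rotate j)
    (hpal' : u'.reverse = u') :
    u' = u := by
  subst hrot
  set n := u.length with hn
  have hnpos : 0 < n := by omega
  -- From the two palindrome conditions, `u.rotate (2*j) = u`.
  have key : u.rotate (2 * j) = u := by
    have h1 : u.rotate (n - j % n) = u.rotate j := by
      rw [List.reverse_rotate, hpal] at hpal'
      exact hpal'
    have h2 := congrArg (fun l => l.rotate j) h1
    simp only [List.rotate_rotate] at h2
    have h3 : (n - j % n + j) % n = 0 := by
      have hj : j % n ≤ j := Nat.mod_le _ _
      have hj2 : j % n < n := Nat.mod_lt _ hnpos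
      have : n - j % n + j = n + (j - j % n) := by omega
      rw [this, Nat.add_mod, Nat.mod_self, Nat.zero_add, Nat.mod_mod]
      have : j - j % n = n * (j / n) := by
        have := Nat.mod_add_div j n
        omega
      rw [this, Nat.mul_mod_right]
    have h4 : u.rotate (n - j % n + j) = u := by
      rw [← List.rotate_mod, h3, List.rotate_zero]
    rw [h4] at h2
    rw [two_mul]
    exact h2.symm
  -- Hence `u.rotate (2*j*m) = u` for all `m`.
  have pow : ∀ m : ℕ, u.rotate (2 * j * m) = u := by
    intro m
    induction m with
    | zero => simp
    | succ m ih =>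
      have : 2 * j * (m + 1) = 2 * j * m + 2 * j := by ring
      rw [this, ← List.rotate_rotate, ih, key]
  -- Apply with `m = r + 1`: `2*j*(r+1) = j*(n+1) ≡ j (mod n)`.
  have h5 := pow (r + 1)
  have h6 : (2 * j * (r + 1)) % n = j % n := by
    have : 2 * j * (r + 1) = j * n + j := by
      rw [hlen]; ring
    rw [this, Nat.add_mod, Nat.mul_mod_left, Nat.zero_add, Nat.mod_mod]
  calc u.rotate j = u.rotate (j % n) := (List.rotate_mod u j).symm
    _ = u.rotate ((2 * j * (r + 1)) % n) := by rw [h6]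
    _ = u.rotate (2 * j * (r + 1)) := List.rotate_mod u _
    _ = u := h5
end

section
/- If u = w⁻¹v in the free group F₂ and both u and v are palindromic with respect to a generating pair, then for every n ∈ ℤ the element wⁿv = (vu⁻¹)ⁿv is also palindromic with respect to the same generating pair. -/
/-- `w` is palindromic with respect to the generating pair: its reduced word reads
the same forwards and backwards. -/
def Palindromic (w : FreeGroup Bool) : Prop := w.toWord.reverse = w.toWord

namespace PalAux

open FreeGroup

/-- The homomorphism sending each generator to its inverse. -/
noncomputable def θ : FreeGroup Bool →* FreeGroup Bool :=
  FreeGroup.lift fun b => (FreeGroup.of b)⁻¹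

lemma theta_mk (L : List (Bool × Bool)) :
    θ (mk L) = mk (L.map fun p => (p.1, !p.2)) := by
  induction L with
  | nil => simp [θ, ← FreeGroup.one_eq_mk]
  | cons x L ih =>
    have : mk (x :: L) = mk [x] * mk L := by rw [FreeGroup.mul_mk]; rfl
    rw [this, MonoidHom.map_mul, ih]
    have hx : θ (mk [x]) = mk [(x.1, !x.2)] := by
      rcases x with ⟨a, b⟩
      have hof : FreeGroup.of a = mk [(a, true)] := rfl
      have hinv : (FreeGroup.of a)⁻¹ = mk [(a, false)] := by
        rw [hof, FreeGroup.inv_mk]; rfl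
      cases b
      · show θ (mk [(a, false)]) = mk [(a, true)]
        rw [← hinv, _root_.map_inv]
        simp only [θ, FreeGroup.lift_apply_of]
        rw [inv_inv, hof]
      · show θ (mk [(a, true)]) = mk [(a, false)]
        rw [← hof]
        simp only [θ, FreeGroup.lift_apply_of]
        exact hinv
    rw [hx, FreeGroup.mul_mk]
    rfl

lemma no_redex {L : List (Bool × Bool)} (h : FreeGroup.reduce L = L) :
    ∀ (A : List (Bool × Bool)) (x : Bool) (b : Bool) (B : List (Bool × Bool)),
      L ≠ A ++ (x, b) :: (x, !b) :: B := by
  intro A x b B hL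
  exact FreeGroup.reduce.not (L₂ := A) (L₃ := B) (x := x) (b := b) (h.trans hL)

lemma reduce_of_no_redex {L : List (Bool × Bool)}
    (h : ∀ (A : List (Bool × Bool)) (x : Bool) (b : Bool) (B : List (Bool × Bool)),
      L ≠ A ++ (x, b) :: (x, !b) :: B) : FreeGroup.reduce L = L := by
  induction L with
  | nil => rfl
  | cons hd tl ih =>
    have htl : FreeGroup.reduce tl = tl := by
      apply ih
      intro A x b B hB
      exact h (hd :: A) x b B (by simp [hB])
    rw [FreeGroup.reduce.cons, htl]
    cases tl with
    | nil => rfl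
    | cons hd2 tl2 =>
      simp only []
      rw [if_neg]
      rintro ⟨h1, h2⟩
      exact h [] hd.1 hd.2 tl2 (by
        rcases hd with ⟨a, b⟩; rcases hd2 with ⟨c, d⟩
        simp only at h1 h2
        subst h1; subst h2
        simp)

lemma reduce_reverse {L : List (Bool × Bool)} (h : FreeGroup.reduce L = L) :
    FreeGroup.reduce L.reverse = L.reverse := by
  apply reduce_of_no_redex
  intro A x b B hB
  have : L = B.reverse ++ (x, !b) :: (x, !(!b)) :: A.reverse := by
    have := congrArg List.reverse hB
    simpa [List.reverse_append, Bool.not_not] using this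
  exact no_redex h B.reverse x (!b) A.reverse this

lemma theta_inv_eq (g : FreeGroup Bool) :
    (θ g)⁻¹ = mk g.toWord.reverse := by
  conv_lhs => rw [← FreeGroup.mk_toWord (x := g)]
  rw [theta_mk, FreeGroup.inv_mk, FreeGroup.invRev]
  congr 1
  rw [List.map_map]
  simp [Function.comp_def]

lemma palindromic_iff (g : FreeGroup Bool) : Palindromic g ↔ θ g = g⁻¹ := by
  have hred : FreeGroup.reduce g.toWord.reverse = g.toWord.reverse :=
    reduce_reverse (FreeGroup.reduce_toWord g)
  constructor
  · intro hp
    have h1 : (θ g)⁻¹ = g := by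
      rw [theta_inv_eq, hp, FreeGroup.mk_toWord]
    simpa using congrArg (·⁻¹) h1
  · intro hθ
    have : (θ g)⁻¹ = g := by rw [hθ, inv_inv]
    have h2 : FreeGroup.toWord ((θ g)⁻¹) = g.toWord.reverse := by
      rw [theta_inv_eq, FreeGroup.toWord_mk, hred]
    unfold Palindromic
    rw [← h2, this]

end PalAux

/-- If `u = w⁻¹v` in `F₂` and both `u` and `v` are palindromic with respect to a
generating pair, then for every `n ∈ ℤ` the element `wⁿv = (vu⁻¹)ⁿv` is also
palindromic with respect to the same generating pair. -/
theorem palindromic_powers (u v w : FreeGroup Bool)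
    (huw : u = w⁻¹ * v) (hu : Palindromic u) (hv : Palindromic v) :
    ∀ n : ℤ, w ^ n * v = (v * u⁻¹) ^ n * v ∧ Palindromic (w ^ n * v) := by
  open PalAux in
  have hw : w = v * u⁻¹ := by
    have : w * u = v := by rw [huw]; group
    rw [← this]; group
  have hu' : θ u = u⁻¹ := (palindromic_iff u).1 hu
  have hv' : θ v = v⁻¹ := (palindromic_iff v).1 hv
  intro n
  refine ⟨by rw [hw], ?_⟩
  rw [palindromic_iff]
  rw [MonoidHom.map_mul, map_zpow, hv', hw, MonoidHom.map_mul, map_inv, hu', hv']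
  rw [mul_inv_rev, ← inv_zpow, mul_inv_rev, inv_inv]
  calc (v⁻¹ * u) ^ n * v⁻¹ = (v⁻¹ * (u * v⁻¹) * (v⁻¹)⁻¹) ^ n * v⁻¹ := by group
    _ = (v⁻¹ * (u * v⁻¹) ^ n * (v⁻¹)⁻¹) * v⁻¹ := by rw [conj_zpow]
    _ = v⁻¹ * (u * v⁻¹) ^ n := by group
end

section
/- Let x, y, z ∈ ℂ satisfy |xy − z| ≤ |z| and |xz − y| ≤ |y|. Then |x| ≤ 2 or y = z = 0. -/
theorem norm_le_two_mul_of_norm_sub_le {E : Type*} [SeminormedAddGroup E] {a b : E}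
    (h : ‖a - b‖ ≤ ‖b‖) : ‖a‖ ≤ 2 * ‖b‖ :=
  calc ‖a‖ ≤ ‖b‖ + ‖a - b‖ := norm_le_norm_add_norm_sub' a b
    _ ≤ 2 * ‖b‖ := by linarith

theorem norm_add_norm_pos {E : Type*} [NormedAddGroup E] {a b : E}
    (h : ¬(a = 0 ∧ b = 0)) : 0 < ‖a‖ + ‖b‖ := by
  rcases not_and_or.1 h with ha | hb
  · exact add_pos_of_pos_of_nonneg (norm_pos_iff.2 ha) (norm_nonneg b)
  · exact add_pos_of_nonneg_of_pos (norm_nonneg a) (norm_pos_iff.2 hb)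

/-- If `x, y, z ∈ ℂ` satisfy `|xy − z| ≤ |z|` and `|xz − y| ≤ |y|`, then
`|x| ≤ 2` or `y = z = 0`. -/
theorem fork_lemma_algebraic (x y z : ℂ)
    (h1 : ‖x * y - z‖ ≤ ‖z‖)
    (h2 : ‖x * z - y‖ ≤ ‖y‖) :
    ‖x‖ ≤ 2 ∨ (y = 0 ∧ z = 0) := by
  refine or_iff_not_imp_right.2 fun hyz => ?_
  have hxy := norm_le_two_mul_of_norm_sub_le h1
  have hxz := norm_le_two_mul_of_norm_sub_le h2
  rw [norm_mul] at hxy hxz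
  -- Adding the two bounds gives ‖x‖ (‖y‖ + ‖z‖) ≤ 2 (‖y‖ + ‖z‖).
  refine le_of_mul_le_mul_right ?_ (norm_add_norm_pos hyz)
  linarith
end

section
/- In a hyperbolic triangle with side lengths a, b, c and angle γ opposite the side of length c, for every k > 0 there exist L > 0 and ε > 0 such that if c ≥ a + b − k and a, b > L, then γ > ε. -/
/-!
Rewrite the law of cosines as `cosh c = cosh (a - b) + sinh a sinh b (1 - cos γ)`.
The left side is at least `e^(a+b-k) / 2`, while `cosh (a - b) ≤ e^(a+b-2 min a b)` is
negligible once `a` and `b` are large, and `sinh a sinh b (1 - cos γ) ≤ e^(a+b) γ² / 8`.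
Dividing by `e^(a+b)` leaves `γ² ≳ 4 e^(-k)`.
-/

open Real

namespace Real

lemma exp_div_two_le_cosh (x : ℝ) : exp x / 2 ≤ cosh x := by
  rw [cosh_eq]
  linarith [exp_pos (-x)]

lemma sinh_le_exp_div_two (x : ℝ) : sinh x ≤ exp x / 2 := by
  rw [sinh_eq]
  linarith [exp_pos (-x)]

lemma cosh_le_exp_abs (x : ℝ) : cosh x ≤ exp |x| := by
  rw [← cosh_abs, cosh_eq]
  linarith [exp_le_exp.2 (neg_le_self (abs_nonneg x))]

lemma sinh_mul_sinh_le_exp_add_div_four (a : ℝ) {b : ℝ} (hb : 0 ≤ b) :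
    sinh a * sinh b ≤ exp (a + b) / 4 :=
  calc sinh a * sinh b ≤ (exp a / 2) * (exp b / 2) :=
        mul_le_mul (sinh_le_exp_div_two a) (sinh_le_exp_div_two b) (sinh_nonneg_iff.2 hb)
          (by positivity)
    _ = exp (a + b) / 4 := by rw [exp_add]; ring

lemma cosh_mul_cosh_sub_sinh_mul_sinh_mul_cos (a b γ : ℝ) :
    cosh a * cosh b - sinh a * sinh b * cos γ = cosh (a - b) + sinh a * sinh b * (1 - cos γ) := by
  rw [cosh_sub]
  ring

lemma cosh_mul_cosh_sub_sinh_mul_sinh_mul_cos_le {a b : ℝ} (ha : 0 ≤ a) (hb : 0 ≤ b) (γ : ℝ) :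
    cosh a * cosh b - sinh a * sinh b * cos γ ≤ exp |a - b| + exp (a + b) * γ ^ 2 / 8 := by
  have hcos : 1 - cos γ ≤ γ ^ 2 / 2 := by linarith [one_sub_sq_div_two_le_cos (x := γ)]
  have hcos' : 0 ≤ 1 - cos γ := sub_nonneg.2 (cos_le_one γ)
  have hsinh : 0 ≤ sinh a * sinh b := mul_nonneg (sinh_nonneg_iff.2 ha) (sinh_nonneg_iff.2 hb)
  calc cosh a * cosh b - sinh a * sinh b * cos γ
        = cosh (a - b) + sinh a * sinh b * (1 - cos γ) :=
          cosh_mul_cosh_sub_sinh_mul_sinh_mul_cos a b γ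
    _ ≤ exp |a - b| + exp (a + b) / 4 * (γ ^ 2 / 2) := by
          gcongr
          · exact cosh_le_exp_abs _
          · exact sinh_mul_sinh_le_exp_add_div_four a hb
    _ = exp |a - b| + exp (a + b) * γ ^ 2 / 8 := by ring

lemma four_mul_exp_neg_sub_le_sq_of_cosh_eq {a b c γ k : ℝ} (ha : 0 ≤ a) (hb : 0 ≤ b)
    (hk : k ≤ a + b) (hcos : cosh c = cosh a * cosh b - sinh a * sinh b * cos γ)
    (hc : a + b - k ≤ c) :
    4 * exp (-k) - 8 * exp (-2 * min a b) ≤ γ ^ 2 := by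
  have habs : |a - b| = a + b - 2 * min a b := by
    linarith [max_sub_min_eq_abs' a b, min_add_max a b]
  have key : exp (a + b - k) / 2 ≤ exp (a + b - 2 * min a b) + exp (a + b) * γ ^ 2 / 8 :=
    calc exp (a + b - k) / 2 ≤ cosh (a + b - k) := exp_div_two_le_cosh _
      _ ≤ cosh c := cosh_le_cosh.2 <| by
            rw [abs_of_nonneg (sub_nonneg.2 hk)]; exact hc.trans (le_abs_self c)
      _ ≤ exp (a + b - 2 * min a b) + exp (a + b) * γ ^ 2 / 8 := by
            rw [hcos, ← habs]
            exact cosh_mul_cosh_sub_sinh_mul_sinh_mul_cos_le ha hb γ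
  have hsplit (x : ℝ) : exp (a + b - x) = exp (a + b) * exp (-x) := by
    rw [← exp_add, sub_eq_add_neg]
  rw [hsplit, hsplit, ← neg_mul] at key
  nlinarith [exp_pos (a + b)]

end Real

/-- In a hyperbolic triangle with side lengths `a, b, c` and angle `γ` opposite the
side of length `c` (so that the hyperbolic law of cosines
`cosh c = cosh a cosh b − sinh a sinh b cos γ` holds): for every `k > 0` there exist
`L > 0` and `ε > 0` such that if `c ≥ a + b − k` and `a, b > L` then `γ > ε`. -/
theorem hyperbolic_triangle_angle_lower_bound :
    ∀ k : ℝ, 0 < k → ∃ L : ℝ, 0 < L ∧ ∃ ε : ℝ, 0 < ε ∧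
      ∀ a b c γ : ℝ, a > L → b > L → 0 ≤ γ → γ ≤ Real.pi →
        Real.cosh c = Real.cosh a * Real.cosh b - Real.sinh a * Real.sinh b * Real.cos γ →
        c ≥ a + b - k → γ > ε := by
  intro k hk
  have hlog : 0 < log 4 := log_pos (by norm_num)
  refine ⟨(k + log 4) / 2, by positivity, exp (-(k / 2)), exp_pos _, ?_⟩
  intro a b c γ ha hb hγ _ hcos hc
  have hmin : (k + log 4) / 2 < min a b := lt_min ha hb
  have hsq := four_mul_exp_neg_sub_le_sq_of_cosh_eq (by linarith) (by linarith)
    (by linarith) hcos hc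
  -- `L` is chosen so that `8 e^(-2L) = 2 e^(-k)`.
  have hsmall : 8 * exp (-2 * min a b) < 2 * exp (-k) :=
    calc 8 * exp (-2 * min a b) < 8 * exp (-k - log 4) := by gcongr; linarith
      _ = 2 * exp (-k) := by rw [exp_sub, exp_log (by norm_num)]; ring
  have hε : exp (-(k / 2)) ^ 2 = exp (-k) := by rw [← exp_nat_mul]; ring_nf
  exact lt_of_pow_lt_pow_left₀ 2 hγ (by linarith [exp_pos (-k)])
end

section
/- For all k > 0 there exist L > 0 and ε > 0 such that for all real a, b > L and γ ∈ [0, π]: if cosh a · cosh b − sinh a · sinh b · cos γ ≥ cosh(a + b − k), then γ > ε. -/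
/-- For all `k > 0` there exist `L > 0` and `ε > 0` such that for all real `a, b > L`
and `γ ∈ [0, π]`: if `cosh a cosh b − sinh a sinh b cos γ ≥ cosh(a + b − k)`,
then `γ > ε`. -/
theorem bending_angle_analytic :
    ∀ k : ℝ, 0 < k → ∃ L : ℝ, 0 < L ∧ ∃ ε : ℝ, 0 < ε ∧
      ∀ a b γ : ℝ, a > L → b > L → 0 ≤ γ → γ ≤ Real.pi →
        Real.cosh (a + b - k) ≤
          Real.cosh a * Real.cosh b - Real.sinh a * Real.sinh b * Real.cos γ →
        γ > ε := by
  intro k hk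
  refine ⟨k + 2, by linarith, Real.exp (-k/2) / 2, by positivity, ?_⟩
  intro a b γ ha hb hγ0 hγπ h
  -- Step 1: sinh a sinh b (1 - cos γ) ≥ cosh(a+b-k) - cosh(a-b)
  have hsub : Real.cosh (a - b) = Real.cosh a * Real.cosh b - Real.sinh a * Real.sinh b := by
    exact Real.cosh_sub a b
  have h1 : Real.cosh (a + b - k) - Real.cosh (a - b)
      ≤ Real.sinh a * Real.sinh b * (1 - Real.cos γ) := by
    rw [hsub]; nlinarith
  -- sinh a sinh b ≤ cosh(a+b)/2
  have hab : Real.sinh a * Real.sinh b ≤ Real.cosh (a + b) / 2 := by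
    have := Real.cosh_sub a b
    have h1 : (1:ℝ) ≤ Real.cosh (a - b) := Real.one_le_cosh _
    have h2 : Real.cosh (a + b) = Real.cosh a * Real.cosh b + Real.sinh a * Real.sinh b :=
      Real.cosh_add a b
    nlinarith
  have hcos1 : 1 - Real.cos γ ≥ 0 := by nlinarith [Real.cos_le_one γ]
  have h2 : Real.cosh (a + b - k) - Real.cosh (a - b)
      ≤ Real.cosh (a + b) / 2 * (1 - Real.cos γ) := by
    calc Real.cosh (a + b - k) - Real.cosh (a - b)
        ≤ Real.sinh a * Real.sinh b * (1 - Real.cos γ) := h1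
      _ ≤ Real.cosh (a + b) / 2 * (1 - Real.cos γ) := by
          apply mul_le_mul_of_nonneg_right hab hcos1
  -- exponential bounds
  have e1 : Real.exp (a + b - k) / 2 ≤ Real.cosh (a + b - k) := by
    rw [Real.cosh_eq]
    have := (Real.exp_pos (-(a + b - k))).le
    linarith
  have e2 : Real.cosh (a - b) ≤ Real.exp (a + b - 2 * (k + 2)) := by
    rw [Real.cosh_eq]
    have l1 : Real.exp (a - b) ≤ Real.exp (a + b - 2 * (k + 2)) :=
      Real.exp_le_exp.mpr (by linarith)
    have l2 : Real.exp (-(a - b)) ≤ Real.exp (a + b - 2 * (k + 2)) :=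
      Real.exp_le_exp.mpr (by linarith)
    linarith
  have e3 : Real.cosh (a + b) ≤ Real.exp (a + b) := by
    rw [Real.cosh_eq]
    have : Real.exp (-(a + b)) ≤ Real.exp (a + b) := Real.exp_le_exp.mpr (by linarith)
    linarith
  have hE : (0:ℝ) < Real.exp (a + b) := Real.exp_pos _
  -- combine: 1 - cos γ ≥ exp(-k) - 2 exp(-2(k+2))
  have key : Real.exp (-k) - 2 * Real.exp (-(2 * (k + 2))) ≤ 1 - Real.cos γ := by
    have hA : Real.exp (a + b - k) = Real.exp (a + b) * Real.exp (-k) := by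
      rw [← Real.exp_add]; ring_nf
    have hB : Real.exp (a + b - 2 * (k + 2)) = Real.exp (a + b) * Real.exp (-(2 * (k + 2))) := by
      rw [← Real.exp_add]; ring_nf
    have h3 : Real.exp (a + b) * Real.exp (-k) / 2
        - Real.exp (a + b) * Real.exp (-(2 * (k + 2)))
        ≤ Real.exp (a + b) / 2 * (1 - Real.cos γ) := by
      calc Real.exp (a + b) * Real.exp (-k) / 2
            - Real.exp (a + b) * Real.exp (-(2 * (k + 2)))
          ≤ Real.cosh (a + b - k) - Real.cosh (a - b) := by
            rw [← hA, ← hB]; linarith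
        _ ≤ Real.cosh (a + b) / 2 * (1 - Real.cos γ) := h2
        _ ≤ Real.exp (a + b) / 2 * (1 - Real.cos γ) := by
            apply mul_le_mul_of_nonneg_right (by linarith) hcos1
    have := (div_le_div_iff_of_pos_right hE).mpr h3
    nlinarith
  -- 2 exp(-2(k+2)) ≤ exp(-k)/2
  have small : 2 * Real.exp (-(2 * (k + 2))) ≤ Real.exp (-k) / 2 := by
    rw [show -(2 * (k + 2)) = -k + (-(k + 4)) by ring, Real.exp_add]
    have h4 : Real.exp (-(k + 4)) ≤ Real.exp (-4 : ℝ) := Real.exp_le_exp.mpr (by linarith)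
    have h5 : Real.exp (-4 : ℝ) ≤ 1/4 := by
      have h6 : (4:ℝ) ≤ Real.exp 4 := by nlinarith [Real.add_one_le_exp (4:ℝ)]
      have h7 := Real.exp_pos (4:ℝ)
      rw [Real.exp_neg, show (1:ℝ)/4 = (4:ℝ)⁻¹ by norm_num]
      exact inv_anti₀ (by norm_num) h6
    nlinarith [Real.exp_pos (-k)]
  have hδ : Real.exp (-k) / 2 ≤ 1 - Real.cos γ := by linarith
  -- 1 - cos γ ≤ γ²/2
  have hquad : 1 - Real.cos γ ≤ γ ^ 2 / 2 := by
    have := Real.one_sub_sq_div_two_le_cos (x := γ)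
    linarith
  have hγ2 : Real.exp (-k) ≤ γ ^ 2 := by linarith
  have hexp : Real.exp (-k/2) ^ 2 = Real.exp (-k) := by
    rw [sq, ← Real.exp_add]; ring_nf
  have hγge : Real.exp (-k/2) ≤ γ := by
    nlinarith [Real.exp_pos (-k/2)]
  have := Real.exp_pos (-k/2)
  linarith
end

section
/- Let φ be the Markoff-type function on the regions adjacent to a fixed region u of the Farey tree: if y_n, n ∈ ℤ, are the regions in order around ∂u, then φ(y_{n+1}) = φ(u)φ(y_n) − φ(y_{n−1}). If φ(u) = x ∈ ℂ with x ∉ [−2,2] and x² ≠ μ where μ := φ(y_{n−1})² + φ(y_n)² + x² − x·φ(y_{n−1})φ(y_n) (independent of n), then |φ(y_n)| → ∞ as n → ±∞. -/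
/-!
Write `x = l + l⁻¹` with `‖l‖ > 1`: this is possible because `‖l‖ = 1` would force
`x = 2 Re l ∈ [-2, 2]`. Then `z n = A lⁿ + B l⁻ⁿ`, and `μ - x² = -A B (l - l⁻¹)²`, so both modes
are present; `A lⁿ` dominates as `n → +∞` and `B l⁻ⁿ` as `n → -∞`.
-/

open Filter Complex

theorem eq_of_two_sided_recurrence {R : Type*} [CommRing R] {a : R} {u v : ℤ → R}
    (hu : ∀ n, u (n + 1) = a * u n - u (n - 1)) (hv : ∀ n, v (n + 1) = a * v n - v (n - 1))
    (h0 : u 0 = v 0) (h1 : u 1 = v 1) : u = v := by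
  have h : ∀ n : ℤ, u n = v n ∧ u (n + 1) = v (n + 1) := by
    intro n
    induction n using Int.induction_on with
    | zero => exact ⟨h0, by simpa using h1⟩
    | succ n ih => exact ⟨ih.2, by rw [hu, hv, add_sub_cancel_right, ih.1, ih.2]⟩
    | pred n ih =>
      refine ⟨?_, by rw [sub_add_cancel]; exact ih.1⟩
      linear_combination hu (-n) - hv (-n) + a * ih.1 - ih.2
  exact funext fun n => (h n).1

section Field

variable {K : Type*} [Field K] {l : K}

theorem mul_zpow_add_mul_zpow_neg_recurrence (hl : l ≠ 0) (A B : K) (n : ℤ) :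
    A * l ^ (n + 1) + B * l ^ (-(n + 1)) =
      (l + l⁻¹) * (A * l ^ n + B * l ^ (-n)) - (A * l ^ (n - 1) + B * l ^ (-(n - 1))) := by
  simp only [neg_add, neg_sub, zpow_add₀ hl, zpow_sub₀ hl, zpow_neg, zpow_one]
  ring

theorem exists_eq_mul_zpow_add_mul_zpow_neg (hl : l ≠ 0) (hl' : l ≠ l⁻¹) {z : ℤ → K}
    (hz : ∀ n, z (n + 1) = (l + l⁻¹) * z n - z (n - 1)) :
    ∃ A B : K, ∀ n, z n = A * l ^ n + B * l ^ (-n) := by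
  set A := (z 1 - z 0 * l⁻¹) / (l - l⁻¹)
  refine ⟨A, z 0 - A, congrFun (eq_of_two_sided_recurrence
    (v := fun n => A * l ^ n + (z 0 - A) * l ^ (-n))
    hz (mul_zpow_add_mul_zpow_neg_recurrence hl _ _) (by simp) ?_)⟩
  have hA : A * (l - l⁻¹) = z 1 - z 0 * l⁻¹ := div_mul_cancel₀ _ (sub_ne_zero.2 hl')
  simp only [zpow_one, zpow_neg]
  linear_combination -hA

/-- `μ - x²` at `z 0 = A + B`, `z 1 = A l + B l⁻¹`. -/
theorem markoff_invariant_sub_sq_eq (hl : l ≠ 0) (A B : K) :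
    (A + B) ^ 2 + (A * l + B * l⁻¹) ^ 2 - (l + l⁻¹) * (A + B) * (A * l + B * l⁻¹) =
      -(A * B * (l - l⁻¹) ^ 2) := by
  field_simp
  ring

end Field

theorem tendsto_zpow_atTop_atTop_of_one_lt {r : ℝ} (hr : 1 < r) :
    Tendsto (fun n : ℤ => r ^ n) atTop atTop := by
  refine tendsto_atTop_atTop_of_monotone (fun _ _ h => zpow_le_zpow_right₀ hr.le h) fun b => ?_
  obtain ⟨N, hN⟩ := pow_unbounded_of_one_lt b hr
  exact ⟨N, by simpa using hN.le⟩

theorem tendsto_norm_mul_zpow_add_mul_zpow_neg {𝕜 : Type*} [NormedField 𝕜] {l A : 𝕜}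
    (hl : 1 < ‖l‖) (hA : A ≠ 0) (B : 𝕜) :
    Tendsto (fun n : ℤ => ‖A * l ^ n + B * l ^ (-n)‖) atTop atTop := by
  have hlower : Tendsto (fun n : ℤ => ‖A‖ * ‖l‖ ^ n - ‖B‖) atTop atTop :=
    tendsto_atTop_add_const_right _ _
      ((tendsto_zpow_atTop_atTop_of_one_lt hl).const_mul_atTop (norm_pos_iff.2 hA))
  refine tendsto_atTop_mono' _ ?_ hlower
  filter_upwards [eventually_ge_atTop 0] with n hn
  have hsmall : ‖B * l ^ (-n)‖ ≤ ‖B‖ := by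
    rw [norm_mul, norm_zpow]
    exact mul_le_of_le_one_right (norm_nonneg B) (zpow_le_one_of_nonpos₀ hl.le (by omega))
  have := norm_sub_le (A * l ^ n + B * l ^ (-n)) (B * l ^ (-n))
  rw [add_sub_cancel_right, norm_mul, norm_zpow] at this
  linarith

theorem Complex.add_inv_mem_Icc_of_norm_eq_one {l : ℂ} (hl : ‖l‖ = 1) :
    l + l⁻¹ ∈ (fun t : ℝ => (t : ℂ)) '' Set.Icc (-2 : ℝ) 2 := by
  have hre := abs_le.1 (hl ▸ abs_re_le_norm l)
  exact ⟨2 * l.re, ⟨by linarith, by linarith⟩, by rw [inv_eq_conj hl, add_conj]⟩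

theorem Complex.exists_add_inv_eq (x : ℂ) : ∃ l : ℂ, l ≠ 0 ∧ l + l⁻¹ = x := by
  obtain ⟨w, hw⟩ := IsAlgClosed.exists_eq_mul_self (x ^ 2 - 4)
  have hprod : (x + w) / 2 * ((x - w) / 2) = 1 := by linear_combination (1 / 4 : ℂ) * hw
  refine ⟨(x + w) / 2, left_ne_zero_of_mul_eq_one hprod, ?_⟩
  rw [← eq_inv_of_mul_eq_one_right hprod]
  ring

theorem Complex.exists_one_lt_norm_add_inv_eq {x : ℂ}
    (hx : x ∉ (fun t : ℝ => (t : ℂ)) '' Set.Icc (-2 : ℝ) 2) :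
    ∃ l : ℂ, 1 < ‖l‖ ∧ l + l⁻¹ = x := by
  obtain ⟨l, hl0, rfl⟩ := exists_add_inv_eq x
  have hl1 : ‖l‖ ≠ 1 := fun h => hx (add_inv_mem_Icc_of_norm_eq_one h)
  rcases hl1.lt_or_gt with h | h
  · exact ⟨l⁻¹, by rwa [norm_inv, one_lt_inv₀ (norm_pos_iff.2 hl0)], by rw [inv_inv, add_comm]⟩
  · exact ⟨l, h, rfl⟩

/-- Growth of a Markoff-type recurrence around the boundary of a region: if
`z : ℤ → ℂ` satisfies `z_{n+1} = x z_n − z_{n−1}` with `x ∉ [−2,2]` and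
`x² ≠ μ` where `μ = z₀² + z₁² + x² − x z₀ z₁`, then `|z_n| → ∞` as `n → ±∞`. -/
theorem markoff_boundary_growth (x : ℂ) (z : ℤ → ℂ)
    (hrec : ∀ n : ℤ, z (n + 1) = x * z n - z (n - 1))
    (hx : x ∉ (fun t : ℝ => (t : ℂ)) '' Set.Icc (-2 : ℝ) 2)
    (hμ : x ^ 2 ≠ z 0 ^ 2 + z 1 ^ 2 + x ^ 2 - x * z 0 * z 1) :
    Filter.Tendsto (fun n => ‖z n‖) Filter.atTop Filter.atTop ∧
    Filter.Tendsto (fun n => ‖z n‖) Filter.atBot Filter.atTop := by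
  obtain ⟨l, hl, rfl⟩ := exists_one_lt_norm_add_inv_eq hx
  have hl0 : l ≠ 0 := norm_pos_iff.1 (one_pos.trans hl)
  have hl' : l ≠ l⁻¹ := ne_of_apply_ne norm <| by
    rw [norm_inv]
    exact ((inv_lt_one_of_one_lt₀ hl).trans hl).ne'
  obtain ⟨A, B, hz⟩ := exists_eq_mul_zpow_add_mul_zpow_neg hl0 hl' hrec
  have hAB : A * B ≠ 0 := by
    intro hAB
    apply hμ
    simp only [hz, zpow_zero, neg_zero, zpow_one, zpow_neg, mul_one]
    linear_combination -markoff_invariant_sub_sq_eq hl0 A B + (l - l⁻¹) ^ 2 * hAB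
  refine ⟨?_, ?_⟩
  · simpa only [hz] using tendsto_norm_mul_zpow_add_mul_zpow_neg hl (left_ne_zero_of_mul hAB) B
  · have := (tendsto_norm_mul_zpow_add_mul_zpow_neg hl (right_ne_zero_of_mul hAB) A).comp
      tendsto_neg_atBot_atTop
    simpa [Function.comp_def, hz, add_comm] using this
end

section
/- Let δ = d + iθ ∈ ℂ with d ≥ 0 and suppose |cosh δ + 1| ≤ C e^{−m} for constants C > 0 and m > 0 large enough that C e^{−m} < 1. Then d = O(e^{−m}): explicitly, there is a constant C' depending only on C such that d ≤ C' e^{−m} for all sufficiently large m. -/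
/-!
Writing `cosh (d + θi) + 1 = (cosh d cos θ + 1) + (sinh d sin θ) i` and using `cosh² d - sinh² d = 1`
and `sin² θ + cos² θ = 1`, its modulus is exactly `cosh d + cos θ`. Since `cos θ ≥ -1`, a small
modulus forces `cosh d - 1 = 2 sinh² (d / 2) ≥ d² / 2` to be small, so `d ≤ √(2C) e^{-m/2}`.
-/

open Complex in
theorem Complex.norm_cosh_add_mul_I_add_one (x y : ℝ) :
    ‖cosh (x + y * I) + 1‖ = Real.cosh x + Real.cos y := by
  have hre : (cosh (x + y * I) + 1).re = Real.cosh x * Real.cos y + 1 := by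
    simp [cosh_add, cosh_mul_I, sinh_mul_I, ← ofReal_cosh, ← ofReal_sinh, ← ofReal_cos,
      ← ofReal_sin]
  have him : (cosh (x + y * I) + 1).im = Real.sinh x * Real.sin y := by
    simp [cosh_add, cosh_mul_I, sinh_mul_I, ← ofReal_cosh, ← ofReal_sinh, ← ofReal_cos,
      ← ofReal_sin]
  have hsq : ‖cosh (x + y * I) + 1‖ ^ 2 = (Real.cosh x + Real.cos y) ^ 2 := by
    rw [Complex.sq_norm, normSq_apply, hre, him]
    linear_combination (-Real.sin y ^ 2) * Real.cosh_sq_sub_sinh_sq x +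
      (Real.cosh x ^ 2 - 1) * Real.sin_sq_add_cos_sq y
  have hnonneg : 0 ≤ Real.cosh x + Real.cos y := by
    linarith [Real.one_le_cosh x, Real.neg_one_le_cos y]
  exact (sq_eq_sq₀ (norm_nonneg _) hnonneg).mp hsq

theorem Real.sq_div_two_le_cosh_sub_one (x : ℝ) : x ^ 2 / 2 ≤ Real.cosh x - 1 := by
  have hhalf : Real.cosh x - 1 = 2 * Real.sinh (x / 2) ^ 2 := by
    have hdouble := Real.cosh_two_mul (x / 2)
    rw [mul_div_cancel₀ x two_ne_zero, Real.cosh_sq] at hdouble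
    linarith
  have hsinh : |x / 2| ≤ |Real.sinh (x / 2)| := by
    rw [Real.abs_sinh, Real.self_le_sinh_iff]
    exact abs_nonneg _
  nlinarith [sq_le_sq.mpr hsinh]

/-- If `δ = d + iθ` with `d ≥ 0` and `|cosh δ + 1| ≤ C e^{−m}`, then
`d ≤ C' e^{−m/2}` for sufficiently large `m`, with `C'` depending only on `C`. -/
theorem small_cosh_implies_small_distance :
    ∀ C : ℝ, 0 < C → ∃ C' : ℝ, 0 < C' ∧ ∃ m₀ : ℝ, ∀ m : ℝ, m₀ ≤ m →
      ∀ d θ : ℝ, 0 ≤ d →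
        ‖Complex.cosh (d + θ * Complex.I) + 1‖ ≤ C * Real.exp (-m) →
        d ≤ C' * Real.exp (-m / 2) := by
  intro C hC
  refine ⟨√(2 * C), by positivity, 0, fun m _ d θ hd hsmall => ?_⟩
  rw [Complex.norm_cosh_add_mul_I_add_one] at hsmall
  have hd_sq : d ^ 2 ≤ 2 * C * Real.exp (-m) := by
    linarith [Real.sq_div_two_le_cosh_sub_one d, Real.neg_one_le_cos θ]
  have hbound_sq : (√(2 * C) * Real.exp (-m / 2)) ^ 2 = 2 * C * Real.exp (-m) := by
    rw [mul_pow, Real.sq_sqrt (by positivity), ← Real.exp_nat_mul]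
    ring_nf
  exact (pow_le_pow_iff_left₀ hd (by positivity) two_ne_zero).mp (hbound_sq ▸ hd_sq)
end
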